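/- Let c be the two-phase speed function with c₁ ≥ c₂ > 0. Then for all x ≥ 0, q ≥ 0 and t > 0, the infimum over continuous, piecewise C¹ paths w : [0,t] → ℝ with w(0) = q and w(t) = x of ∫₀ᵗ c(w(s)) g(w′(s)/c(w(s))) ds equals c₂ t g( (x−q)/(t c₂) ); in particular it is attained by the straight line from (0,q) to (t,x). -/

import Mathlib

open MeasureTheory ProbabilityTheory Real Set Filter Topology

noncomputable section


/-! ### The Hopf–Lax type variational formula for TASEP with discontinuous rates -/

/-- The wedge shape function `g`: `g(y) = -y` for `y ≤ -1`, `(1-y)²/4` for `-1 ≤ y ≤ 1`,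
`0` for `y ≥ 1`. -/
def gfun (y : ℝ) : ℝ := if y ≤ -1 then -y else if y ≤ 1 then (1 - y) ^ 2 / 4 else 0

/-- A continuous, piecewise `C¹` path `w : [0,t] → ℝ` with `w(t) = x`. -/
def IsVPath (t x : ℝ) (w : ℝ → ℝ) : Prop :=
  ContinuousOn w (Icc 0 t) ∧ w t = x ∧
    ∃ (k : ℕ) (s : Fin (k + 1) → ℝ), StrictMono s ∧ s 0 = 0 ∧ s (Fin.last k) = t ∧
      ∀ i : Fin k, ContDiffOn ℝ 1 w (Icc (s i.castSucc) (s i.succ))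

/-- `w` is affine on `[a,b]`. -/
def AffineOnR (w : ℝ → ℝ) (a b : ℝ) : Prop :=
  ∀ u ∈ Icc a b, w u = w a + ((u - a) / (b - a)) * (w b - w a)

/-- A continuous, piecewise linear path `w : [0,t] → ℝ` with `w(t) = x`. -/
def IsPLPath (t x : ℝ) (w : ℝ → ℝ) : Prop :=
  ContinuousOn w (Icc 0 t) ∧ w t = x ∧
    ∃ (k : ℕ) (s : Fin (k + 1) → ℝ), StrictMono s ∧ s 0 = 0 ∧ s (Fin.last k) = t ∧
      ∀ i : Fin k, AffineOnR w (s i.castSucc) (s i.succ)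

/-- `v₀` is an antiderivative of the initial profile `ρ₀`, normalized by `v₀(0) = 0`. -/
def IsV0For (ρ₀ v₀ : ℝ → ℝ) : Prop :=
  v₀ 0 = 0 ∧ ∀ a b : ℝ, v₀ b - v₀ a = ∫ x in a..b, ρ₀ x

/-- The variational formula:
`v(x,t) = sup over paths w with w(t) = x of { v₀(w(0)) - ∫₀ᵗ c(w(s)) g(w'(s)/c(w(s))) ds }`,
with `v(x,0) = v₀(x)`. -/
def vFun (c v₀ : ℝ → ℝ) (x t : ℝ) : ℝ :=
  if t ≤ 0 then v₀ x
  else sSup { A | ∃ w : ℝ → ℝ, IsVPath t x w ∧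
    A = v₀ (w 0) - ∫ s in (0:ℝ)..t, c (w s) * gfun (deriv w s / c (w s)) }

/-- The two-phase speed function: `c₁` to the left of the origin, `c₂` to its right. -/
def twoPhase (c₁ c₂ : ℝ) : ℝ → ℝ := fun u => if u < 0 then c₁ else c₂

/-- The conjugate `(a·h)*(y) = inf_{ρ ∈ ℝ} ( yρ - a ρ(1-ρ) )` of the unrestricted flux. -/
def hstar (a y : ℝ) : ℝ := sInf { v | ∃ ρ : ℝ, v = y * ρ - a * (ρ * (1 - ρ)) }

/-- The Hopf–Lax formula over piecewise linear paths with the conjugate `(c·h)*`. -/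
def VFunPL (c v₀ : ℝ → ℝ) (x t : ℝ) : ℝ :=
  sSup { A | ∃ w : ℝ → ℝ, IsPLPath t x w ∧
    A = v₀ (w 0) + ∫ s in (0:ℝ)..t, hstar (c (w s)) (deriv w s) }

/-! The perspective `c ↦ c g(y/c)` of the convex function `g` is nondecreasing in `c`, so on any
path the running cost with speed `c ≥ c₂` dominates the cost with constant speed `c₂`. For constant
speed, Jensen's inequality (here: integrating the tangent line of `g` at the mean slope
`m = (x-q)/(t c₂)`) bounds the action below by `c₂ t g(m)`, the action of the straight line. When
`x, q ≥ 0` the straight line stays in `[0, ∞)`, where the speed is exactly `c₂`. -/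

def action (c : ℝ → ℝ) (t : ℝ) (w : ℝ → ℝ) : ℝ :=
  ∫ s in (0:ℝ)..t, c (w s) * gfun (deriv w s / c (w s))

lemma measurable_gfun : Measurable gfun := by
  unfold gfun
  exact measurable_neg.ite (measurableSet_le measurable_id measurable_const)
    (Measurable.ite (measurableSet_le measurable_id measurable_const) (by fun_prop)
      measurable_const)

lemma gfun_nonneg (y : ℝ) : 0 ≤ gfun y := by
  unfold gfun; split_ifs <;> nlinarith [sq_nonneg (1 - y)]

lemma gfun_le_one_add_abs (y : ℝ) : gfun y ≤ 1 + |y| := by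
  unfold gfun
  rcases abs_cases y with ⟨h, h'⟩ | ⟨h, h'⟩ <;> split_ifs <;> nlinarith [sq_nonneg (1 + y)]

/-- With `u = y / c`, `∂_c (c g(y/c)) = g(u) - u g'(u)`, which is `0` for `|u| ≥ 1` and
`(1 - u²)/4 ≥ 0` for `|u| ≤ 1`. -/
lemma mul_gfun_div_le_mul_gfun_div {b a : ℝ} (y : ℝ) (hb : 0 < b) (hba : b ≤ a) :
    b * gfun (y / b) ≤ a * gfun (y / a) := by
  have ha : 0 < a := hb.trans_le hba
  obtain ⟨p, rfl⟩ : ∃ p, y = p * b := ⟨y / b, (div_mul_cancel₀ y hb.ne').symm⟩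
  obtain ⟨r, hpr⟩ : ∃ r, p * b = r * a := ⟨p * b / a, (div_mul_cancel₀ _ ha.ne').symm⟩
  rw [mul_div_cancel_right₀ p hb.ne', hpr, mul_div_cancel_right₀ r ha.ne']
  unfold gfun
  split_ifs <;> try linarith
  · nlinarith [mul_nonneg ha.le (sq_nonneg (1 + r))]
  · nlinarith
  · nlinarith
  · have hpr_le : 0 ≤ 1 - p * r := by nlinarith
    have hprod : 0 ≤ (a - b) * (a * b) * (1 - p * r) :=
      mul_nonneg (mul_nonneg (by linarith) (by positivity)) hpr_le
    nlinarith [mul_pos ha hb]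
  · nlinarith
  · nlinarith
  · nlinarith [mul_nonneg ha.le (sq_nonneg (1 - r))]

/-- The derivative of `gfun`. -/
def gfunSlope (m : ℝ) : ℝ := if m ≤ -1 then -1 else if m ≤ 1 then -(1 - m) / 2 else 0

lemma gfun_add_gfunSlope_mul_le (m y : ℝ) : gfun m + gfunSlope m * (y - m) ≤ gfun y := by
  unfold gfun gfunSlope
  split_ifs <;> nlinarith [sq_nonneg (1 + y), sq_nonneg (y - m), sq_nonneg (1 + m),
    sq_nonneg (1 - m), sq_nonneg (y + m), sq_nonneg (2 - y - m)]

lemma tangent_le_mul_gfun_div {c₀ c : ℝ} (m y : ℝ) (hc₀ : 0 < c₀) (hc : c₀ ≤ c) :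
    c₀ * gfun m + gfunSlope m * (y - c₀ * m) ≤ c * gfun (y / c) :=
  calc c₀ * gfun m + gfunSlope m * (y - c₀ * m)
      = c₀ * (gfun m + gfunSlope m * (y / c₀ - m)) := by field_simp
    _ ≤ c₀ * gfun (y / c₀) := by gcongr; exact gfun_add_gfunSlope_mul_le m _
    _ ≤ c * gfun (y / c) := mul_gfun_div_le_mul_gfun_div y hc₀ hc

lemma ContDiffOn.intervalIntegrable_deriv_and_integral_deriv {w : ℝ → ℝ} {a b : ℝ}
    (hab : a < b) (hw : ContDiffOn ℝ 1 w (Icc a b)) :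
    IntervalIntegrable (deriv w) volume a b ∧ ∫ s in a..b, deriv w s = w b - w a := by
  have hderiv : ∀ u ∈ Ioo a b, HasDerivAt w (deriv w u) u := fun u hu =>
    ((hw.differentiableOn one_ne_zero u (Ioo_subset_Icc_self hu)).differentiableAt
      (Icc_mem_nhds hu.1 hu.2)).hasDerivAt
  have hae : deriv w =ᵐ[volume.restrict (Ioc a b)] derivWithin w (Icc a b) := by
    rw [← Measure.restrict_congr_set Ioo_ae_eq_Ioc]
    filter_upwards [ae_restrict_mem measurableSet_Ioo] with u hu
      using (derivWithin_of_mem_nhds (Icc_mem_nhds hu.1 hu.2)).symm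
  have hint : IntervalIntegrable (deriv w) volume a b := by
    rw [intervalIntegrable_iff_integrableOn_Ioc_of_le hab.le]
    exact ((hw.continuousOn_derivWithin (uniqueDiffOn_Icc hab) le_rfl).integrableOn_Icc.mono_set
      Ioc_subset_Icc_self).congr hae.symm
  exact ⟨hint, intervalIntegral.integral_eq_sub_of_hasDeriv_right_of_le hab.le hw.continuousOn
    (fun u hu => (hderiv u hu).hasDerivWithinAt) hint⟩

lemma IsVPath.exists_nat_partition {t x : ℝ} {w : ℝ → ℝ} (h : IsVPath t x w) :
    ∃ (k : ℕ) (a : ℕ → ℝ), a 0 = 0 ∧ a k = t ∧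
      ∀ i < k, a i < a (i + 1) ∧ ContDiffOn ℝ 1 w (Icc (a i) (a (i + 1))) := by
  obtain ⟨-, -, k, s, hmono, h0, hlast, hpiece⟩ := h
  refine ⟨k, fun n => s ⟨min n k, by omega⟩, by simpa using h0, by simpa [Fin.last] using hlast,
    fun i hi => ?_⟩
  have e₁ : s ⟨min i k, by omega⟩ = s (⟨i, hi⟩ : Fin k).castSucc :=
    congrArg s (Fin.ext (by simp [hi.le]))
  have e₂ : s ⟨min (i + 1) k, by omega⟩ = s (⟨i, hi⟩ : Fin k).succ :=
    congrArg s (Fin.ext (by simp [Nat.succ_le_of_lt hi]))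
  simp only [e₁, e₂]
  exact ⟨hmono Fin.castSucc_lt_succ, hpiece ⟨i, hi⟩⟩

lemma IsVPath.intervalIntegrable_deriv_and_integral_deriv {t x : ℝ} {w : ℝ → ℝ}
    (h : IsVPath t x w) :
    IntervalIntegrable (deriv w) volume 0 t ∧ ∫ s in (0:ℝ)..t, deriv w s = x - w 0 := by
  obtain ⟨k, a, ha₀, hak, hpiece⟩ := h.exists_nat_partition
  have hpiece' := fun i hi => (hpiece i hi).2.intervalIntegrable_deriv_and_integral_deriv
    (hpiece i hi).1
  rw [← h.2.1, ← ha₀, ← hak]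
  refine ⟨IntervalIntegrable.trans_iterate fun i hi => (hpiece' i hi).1, ?_⟩
  rw [← intervalIntegral.sum_integral_adjacent_intervals fun i hi => (hpiece' i hi).1,
    ← Finset.sum_range_sub (fun i => w (a i))]
  exact Finset.sum_congr rfl fun i hi => (hpiece' i (Finset.mem_range.1 hi)).2

lemma IsVPath.intervalIntegrable_action_integrand {c : ℝ → ℝ} {c₀ C t x : ℝ} {w : ℝ → ℝ}
    (hw : IsVPath t x w) (ht : 0 ≤ t) (hc : Measurable c) (hc₀ : ∀ z, c₀ ≤ c z) (hc₀_pos : 0 < c₀)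
    (hC : ∀ z, c z ≤ C) :
    IntervalIntegrable (fun s => c (w s) * gfun (deriv w s / c (w s))) volume 0 t := by
  have hpos : ∀ z, 0 < c z := fun z => hc₀_pos.trans_le (hc₀ z)
  have hbound : ∀ z y, |c z * gfun (y / c z)| ≤ C + |y| := fun z y => by
    rw [abs_of_nonneg (mul_nonneg (hpos z).le (gfun_nonneg _))]
    calc c z * gfun (y / c z) ≤ c z * (1 + |y / c z|) :=
          mul_le_mul_of_nonneg_left (gfun_le_one_add_abs _) (hpos z).le
      _ = c z + |y| := by
          rw [abs_div, abs_of_pos (hpos z), mul_add, mul_one, mul_div_cancel₀ _ (hpos z).ne']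
      _ ≤ C + |y| := by linarith [hC z]
  have hcw : AEMeasurable (fun s => c (w s)) (volume.restrict (Ioc 0 t)) :=
    hc.comp_aemeasurable ((hw.1.mono Ioc_subset_Icc_self).aemeasurable measurableSet_Ioc)
  have hderiv := (intervalIntegrable_iff_integrableOn_Ioc_of_le ht).1
    hw.intervalIntegrable_deriv_and_integral_deriv.1
  rw [intervalIntegrable_iff_integrableOn_Ioc_of_le ht]
  exact ((integrable_const C).add hderiv.abs).mono'
    (hcw.mul (measurable_gfun.comp_aemeasurable
      ((measurable_deriv w).aemeasurable.div hcw))).aestronglyMeasurable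
    (Eventually.of_forall fun s => hbound _ _)

lemma IsVPath.mul_gfun_le_action {c : ℝ → ℝ} {c₀ C t x q : ℝ} {w : ℝ → ℝ}
    (hw : IsVPath t x w) (hwq : w 0 = q) (ht : 0 < t) (hc : Measurable c)
    (hc₀ : ∀ z, c₀ ≤ c z) (hc₀_pos : 0 < c₀) (hC : ∀ z, c z ≤ C) :
    c₀ * t * gfun ((x - q) / (t * c₀)) ≤ action c t w := by
  set m := (x - q) / (t * c₀)
  obtain ⟨hderiv, hderiv_int⟩ := hw.intervalIntegrable_deriv_and_integral_deriv
  have htangent : IntervalIntegrable (fun s => c₀ * gfun m + gfunSlope m * (deriv w s - c₀ * m))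
      volume 0 t :=
    intervalIntegrable_const.add ((hderiv.sub intervalIntegrable_const).const_mul _)
  calc c₀ * t * gfun m
      = ∫ s in (0:ℝ)..t, (c₀ * gfun m + gfunSlope m * (deriv w s - c₀ * m)) := by
        rw [intervalIntegral.integral_add intervalIntegrable_const
            ((hderiv.sub intervalIntegrable_const).const_mul _),
          intervalIntegral.integral_const, intervalIntegral.integral_const_mul,
          intervalIntegral.integral_sub hderiv intervalIntegrable_const, hderiv_int, hwq,
          intervalIntegral.integral_const]
        simp only [smul_eq_mul, sub_zero, m]
        field_simp
        ring
    _ ≤ action c t w := intervalIntegral.integral_mono_on ht.le htangent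
        (hw.intervalIntegrable_action_integrand ht.le hc hc₀ hc₀_pos hC)
        fun s _ => tangent_le_mul_gfun_div m _ hc₀_pos (hc₀ _)

lemma isVPath_line {t q x : ℝ} (ht : 0 < t) : IsVPath t x (fun s => q + s * ((x - q) / t)) := by
  refine ⟨by fun_prop, by field_simp; ring, 1, ![0, t], ?_, rfl, rfl,
    fun _ => ContDiff.contDiffOn (by fun_prop)⟩
  simpa [Fin.strictMono_iff_lt_succ] using ht

lemma measurable_twoPhase (c₁ c₂ : ℝ) : Measurable (twoPhase c₁ c₂) :=
  Measurable.ite (measurableSet_lt measurable_id measurable_const) measurable_const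
    measurable_const

lemma le_twoPhase {c₁ c₂ : ℝ} (h₁₂ : c₂ ≤ c₁) (z : ℝ) : c₂ ≤ twoPhase c₁ c₂ z := by
  unfold twoPhase; split_ifs <;> linarith

lemma twoPhase_le {c₁ c₂ : ℝ} (h₁₂ : c₂ ≤ c₁) (z : ℝ) : twoPhase c₁ c₂ z ≤ c₁ := by
  unfold twoPhase; split_ifs <;> linarith

lemma action_twoPhase_line {c₁ c₂ x q t : ℝ} (hx : 0 ≤ x) (hq : 0 ≤ q) (ht : 0 < t) :
    action (twoPhase c₁ c₂) t (fun s => q + s * ((x - q) / t)) =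
      c₂ * t * gfun ((x - q) / (t * c₂)) := by
  set v := (x - q) / t
  have hderiv : ∀ s, deriv (fun u : ℝ => q + u * v) s = v := fun s => by simp
  have hnonneg : ∀ s ∈ Icc 0 t, 0 ≤ q + s * v := fun s hs => by
    have hconvex : q + s * v = (1 - s / t) * q + (s / t) * x := by
      simp only [v]; field_simp; ring
    have hle : s / t ≤ 1 := (div_le_one ht).2 hs.2
    have hge : 0 ≤ s / t := div_nonneg hs.1 ht.le
    rw [hconvex]
    nlinarith
  unfold action
  rw [intervalIntegral.integral_congr (g := fun _ => c₂ * gfun (v / c₂)) fun s hs => by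
    simp only [hderiv, twoPhase, if_neg (not_lt.2 (hnonneg s (uIcc_of_le ht.le ▸ hs)))]]
  simp only [intervalIntegral.integral_const, smul_eq_mul, sub_zero, v, div_div]
  ring

/-- Theorem: for the two-phase speed function and `x, q ≥ 0` the action infimum between `q`
and `x` equals `c₂ t g((x-q)/(t c₂))` and is attained by the straight-line path. -/
theorem stmt17 (c₁ c₂ x q t : ℝ) (h₁₂ : c₂ ≤ c₁) (h₂ : 0 < c₂)
    (hx : 0 ≤ x) (hq : 0 ≤ q) (ht : 0 < t) :
    IsLeast
      { A | ∃ w : ℝ → ℝ, IsVPath t x w ∧ w 0 = q ∧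
          A = ∫ s in (0:ℝ)..t,
            twoPhase c₁ c₂ (w s) * gfun (deriv w s / twoPhase c₁ c₂ (w s)) }
      (c₂ * t * gfun ((x - q) / (t * c₂))) ∧
    IsVPath t x (fun s => q + s * ((x - q) / t)) ∧
    (fun s : ℝ => q + s * ((x - q) / t)) 0 = q ∧
    (∫ s in (0:ℝ)..t,
        twoPhase c₁ c₂ (q + s * ((x - q) / t)) *
          gfun (deriv (fun u : ℝ => q + u * ((x - q) / t)) s /
            twoPhase c₁ c₂ (q + s * ((x - q) / t)))) =
      c₂ * t * gfun ((x - q) / (t * c₂)) := by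
  have hline := isVPath_line (q := q) (x := x) ht
  have hline_action := action_twoPhase_line (c₁ := c₁) (c₂ := c₂) hx hq ht
  refine ⟨⟨⟨_, hline, by simp, hline_action.symm⟩, ?_⟩, hline, by simp, hline_action⟩
  rintro _ ⟨w, hw, hwq, rfl⟩
  exact hw.mul_gfun_le_action hwq ht (measurable_twoPhase c₁ c₂) (le_twoPhase h₁₂) h₂
    (twoPhase_le h₁₂)

end
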